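/- arXiv:2603.25662 — 4 statements merged into one kernel-verified Lean document; each statement's English description precedes it below -/
import Mathlib

section
/- Every Θ-class of a daisy cube G ⊆ Q_n contains exactly one edge incident to the minimum vertex 0^n. -/
open SimpleGraph Function

/-- The hypercube graph `Q_n` on binary strings of length `n`. -/
def cubeGraph (n : ℕ) : SimpleGraph (Fin n → Bool) where
  Adj u v := hammingDist u v = 1
  symm := ⟨fun u v h => by simpa [hammingDist_comm] using h⟩
  loopless := ⟨fun u h => by simp [hammingDist_self] at h⟩

/-- The downward closure of a set of binary strings under the coordinatewise order. -/
def dClosure {n : ℕ} (X : Set (Fin n → Bool)) : Set (Fin n → Bool) :=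
  {u | ∃ x ∈ X, u ≤ x}

/-- The daisy cube `Q_n(X)`: the subgraph of `Q_n` induced by the downward closure of `X`. -/
def daisyCube (n : ℕ) (X : Set (Fin n → Bool)) : SimpleGraph (dClosure X) :=
  (cubeGraph n).induce (dClosure X)

/-- The τ-graph of a (coordinatized) partial cube `G ⊆ Q_n`, with Θ-classes identified with the
coordinates: two classes are adjacent iff incident edges, one flipping each coordinate, form a
convex path on three vertices. -/
def coordTau {n : ℕ} {V : Type*} (val : V → (Fin n → Bool)) (G : SimpleGraph V) :
    SimpleGraph (Fin n) where
  Adj i j := i ≠ j ∧ ∃ u v w : V, G.Adj u v ∧ G.Adj v w ∧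
      val u i ≠ val v i ∧ val v j ≠ val w j ∧
      ¬ G.Adj u w ∧ ∀ x : V, G.Adj u x → G.Adj w x → x = v
  symm := ⟨by
    rintro i j ⟨hij, u, v, w, h1, h2, h3, h4, h5, h6⟩
    exact ⟨hij.symm, w, v, u, h2.symm, h1.symm, fun h => h4 h.symm, fun h => h3 h.symm,
      fun h => h5 h.symm, fun x hw hu => h6 x hu hw⟩⟩
  loopless := ⟨by
    rintro i ⟨hij, _⟩
    exact hij rfl⟩


section Hamming

variable {ι β : Type*} [Fintype ι] [DecidableEq ι] [DecidableEq β]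

theorem hammingDist_update_of_ne (u : ι → β) {i : ι} {b : β} (h : u i ≠ b) :
    hammingDist u (update u i b) = 1 := by
  have : ({j | u j ≠ update u i b j} : Finset ι) = {i} := by
    ext j
    by_cases hj : j = i
    · subst hj; simpa using h
    · simp [hj]
  rw [hammingDist, this, Finset.card_singleton]

theorem eq_update_of_hammingDist_eq_one {u w : ι → β} {i : ι} (hd : hammingDist u w = 1)
    (hi : u i ≠ w i) : w = update u i (w i) := by
  refine eq_update_iff.mpr ⟨rfl, fun j hj => of_not_not fun hne => hj ?_⟩
  exact Finset.card_le_one.mp hd.le j (by simpa [eq_comm] using hne) i (by simpa using hi)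

end Hamming

theorem cubeGraph_adj_and_ne_iff {n : ℕ} {u w : Fin n → Bool} {i : Fin n} :
    (cubeGraph n).Adj u w ∧ u i ≠ w i ↔ w = update u i (!u i) := by
  constructor
  · rintro ⟨hadj, hi⟩
    rw [← Bool.eq_not.mpr hi.symm]
    exact eq_update_of_hammingDist_eq_one hadj hi
  · rintro rfl
    have hflip : u i ≠ !u i := (Bool.not_ne_self (u i)).symm
    exact ⟨hammingDist_update_of_ne u hflip, by rwa [update_self]⟩

theorem isLowerSet_dClosure {n : ℕ} (X : Set (Fin n → Bool)) : IsLowerSet (dClosure X) :=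
  fun _ _ hle ⟨x, hx, hax⟩ => ⟨x, hx, hle.trans hax⟩

theorem update_bot_mem_dClosure {n : ℕ} {X : Set (Fin n → Bool)} {w : Fin n → Bool}
    {i : Fin n} (hw : w ∈ dClosure X) (hi : w i = true) : update ⊥ i true ∈ dClosure X :=
  isLowerSet_dClosure X (update_le_iff.mpr ⟨hi.ge, fun _ _ => bot_le⟩) hw

/-- Every Θ-class of a daisy cube `G ⊆ Q_n` (the Θ-class of coordinate `i`
consists of the edges whose endpoints differ in coordinate `i`) contains exactly one edge
incident to the minimum vertex `0^n`. -/
theorem daisyCube_theta_class_unique_edge_at_zero (n : ℕ) (X : Set (Fin n → Bool))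
    (z : dClosure X) (hz : z.1 = fun _ => false) (i : Fin n)
    (hclass : ∃ u v : dClosure X, (daisyCube n X).Adj u v ∧ u.1 i ≠ v.1 i) :
    ∃! v : dClosure X, (daisyCube n X).Adj z v ∧ z.1 i ≠ v.1 i := by
  obtain ⟨u, v, -, huv⟩ := hclass
  obtain ⟨w, hw, hwi⟩ : ∃ w ∈ dClosure X, w i = true := by
    cases hu : u.1 i
    · exact ⟨v.1, v.2, by simpa [hu] using huv.symm⟩
    · exact ⟨u.1, u.2, hu⟩
  have hmem : update z.1 i (!z.1 i) ∈ dClosure X := by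
    rw [hz]
    exact update_bot_mem_dClosure hw hwi
  exact ⟨⟨_, hmem⟩, cubeGraph_adj_and_ne_iff.mpr rfl,
    fun v hv => Subtype.ext (cubeGraph_adj_and_ne_iff.mp hv)⟩
end

section
/- The Lucas cube Λ_n (n ≥ 3) is isomorphic to the simplex graph of the complement of the cycle C_n. -/
open SimpleGraph Function

/-- The simplex graph `K(G)` of a graph `G`: vertices are the cliques of `G` (as finite sets,
including the empty clique), two cliques adjacent iff they differ in exactly one vertex. -/
def simplexGraph {V : Type*} [DecidableEq V] (G : SimpleGraph V) :
    SimpleGraph {s : Finset V // G.IsClique (s : Set V)} where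
  Adj s t := (symmDiff s.1 t.1).card = 1
  symm := ⟨fun s t h => by simpa [symmDiff_comm] using h⟩
  loopless := ⟨fun s h => by simp [symmDiff_self] at h⟩

/-- Binary strings of length `n` with no two cyclically consecutive 1's. -/
def lucasSet (n : ℕ) : Set (Fin n → Bool) :=
  {u | ∀ i j : Fin n, ((i : ℕ) + 1) % n = (j : ℕ) → ¬(u i = true ∧ u j = true)}

/-- The Lucas cube `Λ_n`. -/
def lucasCube (n : ℕ) : SimpleGraph (lucasSet n) :=
  (cubeGraph n).induce (lucasSet n)

/-! Identifying a binary string with its support turns Hamming distance into the size of a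
symmetric difference, and a string has no two cyclically consecutive 1's exactly when its support
is independent in `C_n`, i.e. a clique of its complement. So the support map carries `Λ_n` onto
`K(C̄_n)`. -/

def boolFunEquivFinset (ι : Type*) [Fintype ι] [DecidableEq ι] : (ι → Bool) ≃ Finset ι where
  toFun u := {i | u i}
  invFun s i := i ∈ s
  left_inv u := by ext; simp
  right_inv s := by ext; simp

@[simp]
theorem mem_boolFunEquivFinset {ι : Type*} [Fintype ι] [DecidableEq ι] {u : ι → Bool} {i : ι} :
    i ∈ boolFunEquivFinset ι u ↔ u i = true := by
  simp [boolFunEquivFinset]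

theorem hammingDist_eq_card_symmDiff {ι : Type*} [Fintype ι] [DecidableEq ι] (u v : ι → Bool) :
    hammingDist u v =
      (symmDiff (boolFunEquivFinset ι u) (boolFunEquivFinset ι v)).card := by
  unfold hammingDist
  congr 1
  ext i
  cases hu : u i <;> cases hv : v i <;> simp [Finset.mem_symmDiff, hu, hv]

def cubeGraphInduceIsoSimplexGraph {n : ℕ} (G : SimpleGraph (Fin n)) (S : Set (Fin n → Bool))
    (hS : ∀ u, u ∈ S ↔ G.IsClique (boolFunEquivFinset (Fin n) u : Set (Fin n))) :
    (cubeGraph n).induce S ≃g simplexGraph G where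
  toEquiv := (boolFunEquivFinset (Fin n)).subtypeEquiv hS
  map_rel_iff' {u v} := by
    change (symmDiff (boolFunEquivFinset _ u.1) (boolFunEquivFinset _ v.1)).card = 1 ↔
      hammingDist u.1 v.1 = 1
    rw [hammingDist_eq_card_symmDiff]

theorem Fin.val_add_one_mod_eq_iff {n : ℕ} [NeZero n] (i j : Fin n) :
    ((i : ℕ) + 1) % n = j ↔ i + 1 = j := by
  rw [Fin.ext_iff, Fin.val_add, Fin.val_one', Nat.add_mod_mod]

theorem mem_lucasSet_iff_isClique_compl_cycleGraph {n : ℕ} (u : Fin (n + 2) → Bool) :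
    u ∈ lucasSet (n + 2) ↔
      (cycleGraph (n + 2))ᶜ.IsClique (boolFunEquivFinset (Fin (n + 2)) u : Set (Fin (n + 2))) := by
  simp only [lucasSet, Fin.val_add_one_mod_eq_iff, isClique_iff, Set.Pairwise, Finset.mem_coe,
    mem_boolFunEquivFinset, compl_adj, cycleGraph_adj]
  constructor
  · rintro h i hi j hj hij
    refine ⟨hij, ?_⟩
    rintro (hji | hij)
    · exact h j i (sub_eq_iff_eq_add'.mp hji).symm ⟨hj, hi⟩
    · exact h i j (sub_eq_iff_eq_add'.mp hij).symm ⟨hi, hj⟩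
  · rintro h i _ rfl ⟨hi, hj⟩
    exact (h hi hj (by simp)).2 (Or.inr (add_sub_cancel_left i 1))

/-- The Lucas cube `Λ_n` (`n ≥ 3`) is isomorphic to the simplex graph of the
complement of the cycle `C_n`. -/
theorem lucasCube_iso_simplex_compl_cycle (n : ℕ) (hn : 3 ≤ n) :
    Nonempty (lucasCube n ≃g simplexGraph (SimpleGraph.cycleGraph n)ᶜ) := by
  obtain ⟨m, rfl⟩ : ∃ m, n = m + 2 := ⟨n - 2, by omega⟩
  exact ⟨cubeGraphInduceIsoSimplexGraph _ _ (mem_lucasSet_iff_isClique_compl_cycleGraph (n := m))⟩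
end

section
/- If G is a partial cube and F_ab = {e ∈ E(G) : e Θ ab} is the Θ-class of an edge ab, then the spanning subgraph G − F_ab obtained by deleting the edges in F_ab has exactly two connected components, with vertex sets W_ab = {w : d(w,a) < d(w,b)} and W_ba = {w : d(w,b) < d(w,a)}. -/
open SimpleGraph Function

/-- A partial cube: a connected graph isometrically embeddable into a hypercube. -/
def IsPartialCube {V : Type*} (G : SimpleGraph V) : Prop :=
  G.Connected ∧ ∃ (n : ℕ) (f : V → (Fin n → Bool)), Function.Injective f ∧
    ∀ u v : V, (cubeGraph n).dist (f u) (f v) = G.dist u v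

/-- The Djoković–Winkler relation Θ on (ordered) edges `ab`, `cd`. -/
def ThetaRel {V : Type*} (G : SimpleGraph V) (a b c d : V) : Prop :=
  G.Adj a b ∧ G.Adj c d ∧ G.dist a c + G.dist b d ≠ G.dist a d + G.dist b c

/-- The Θ-class `F_ab` of the edge `ab`, as a set of unordered edges. -/
def thetaClass {V : Type*} (G : SimpleGraph V) (a b : V) : Set (Sym2 V) :=
  {e | ∃ x y : V, e = s(x, y) ∧ ThetaRel G x y a b}

/-- The set `W_ab` of vertices strictly closer to `a` than to `b`. -/
def Wside {V : Type*} (G : SimpleGraph V) (a b : V) : Set V :=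
  {w | G.dist w a < G.dist w b}

/-! A partial cube is bipartite, so every vertex lies in `W_ab` or in `W_ba`, and for `w ∈ W_ab`
we have `d(w, b) = d(w, a) + 1`. Hence an edge `xy` is Θ-related to `ab` exactly when it joins
`W_ab` to `W_ba`: deleting `F_ab` leaves no edge between the two sides, while every vertex of
`W_ab` still reaches `a` along a geodesic, which never leaves `W_ab`. -/

def cubeParity {n : ℕ} (x : Fin n → Bool) : ZMod 2 := ∑ i, ((x i).toNat : ZMod 2)

lemma cast_hammingDist_eq_cubeParity_add {n : ℕ} (x y : Fin n → Bool) :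
    (hammingDist x y : ZMod 2) = cubeParity x + cubeParity y := by
  rw [hammingDist, Finset.card_filter, Nat.cast_sum, cubeParity, cubeParity,
    ← Finset.sum_add_distrib]
  refine Finset.sum_congr rfl fun i _ => ?_
  cases x i <;> cases y i <;> decide

def cubeGraph.parityColoring (n : ℕ) : (cubeGraph n).Coloring (ZMod 2) :=
  Coloring.mk cubeParity fun {x y} hxy heq => by
    have h := cast_hammingDist_eq_cubeParity_add x y
    rw [show hammingDist x y = 1 from hxy, heq, Nat.cast_one] at h
    generalize cubeParity y = p at h
    revert p
    decide

lemma cubeGraph_isBipartite (n : ℕ) : (cubeGraph n).IsBipartite := by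
  simpa using (cubeGraph.parityColoring n).colorable

section

variable {V : Type*} {G : SimpleGraph V}

lemma SimpleGraph.Reachable.exists_adj_dist_add_one_eq {u v : V} (huv : G.Reachable u v)
    (hne : u ≠ v) : ∃ w, G.Adj u w ∧ G.dist w v + 1 = G.dist u v := by
  obtain ⟨p, hp⟩ := huv.exists_walk_length_eq_dist
  cases p with
  | nil => exact absurd rfl hne
  | cons huw q =>
    refine ⟨_, huw, le_antisymm ?_ ?_⟩
    · rw [← hp, Walk.length_cons]
      exact Nat.add_le_add_right (dist_le q) 1
    · calc G.dist u v ≤ G.dist u _ + G.dist _ v := huw.reachable.dist_triangle_left v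
        _ = G.dist _ v + 1 := by rw [dist_eq_one_iff_adj.mpr huw, add_comm]

lemma SimpleGraph.IsBipartite.dist_ne_of_adj (hG : G.IsBipartite) (hconn : G.Connected)
    {a b : V} (hab : G.Adj a b) (w : V) : G.dist w a ≠ G.dist w b := by
  intro h
  let c : G.Coloring Bool := G.recolorOfEquiv finTwoEquiv hG.some
  obtain ⟨p, hp⟩ := hconn.exists_walk_length_eq_dist w a
  obtain ⟨q, hq⟩ := hconn.exists_walk_length_eq_dist w b
  have hpq : (c w ↔ c a) ↔ (c w ↔ c b) := by
    rw [← c.even_length_iff_congr p, ← c.even_length_iff_congr q, hp, hq, h]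
  refine c.valid hab ?_
  revert hpq
  generalize c w = x; generalize c a = y; generalize c b = z
  decide +revert

lemma IsPartialCube.isBipartite (hG : IsPartialCube G) : G.IsBipartite := by
  obtain ⟨-, n, f, -, hf⟩ := hG
  refine Colorable.of_hom ⟨f, fun {u v} huv => ?_⟩ (cubeGraph_isBipartite n)
  rw [← dist_eq_one_iff_adj, hf, dist_eq_one_iff_adj]
  exact huv

lemma mk_mem_thetaClass_iff {a b x y : V} :
    s(x, y) ∈ thetaClass G a b ↔ ThetaRel G x y a b := by
  refine ⟨?_, fun h => ⟨x, y, rfl, h⟩⟩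
  rintro ⟨x', y', he, hΘ⟩
  rcases Sym2.eq_iff.mp he with ⟨rfl, rfl⟩ | ⟨rfl, rfl⟩
  · exact hΘ
  · exact ⟨hΘ.1.symm, hΘ.2.1, by have := hΘ.2.2; omega⟩

lemma thetaClass_comm (a b : V) : thetaClass G a b = thetaClass G b a := by
  ext e
  induction e using Sym2.ind with
  | _ x y => simp only [mk_mem_thetaClass_iff, ThetaRel, ← G.adj_comm a b, ne_comm]

lemma dist_eq_add_one_of_mem_Wside {a b w : V} (hab : G.Adj a b) (hw : w ∈ Wside G a b) :
    G.dist w b = G.dist w a + 1 := by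
  have hlt : G.dist w a < G.dist w b := hw
  rcases hab.diff_dist_adj (u := w) with h | h | h <;> omega

lemma not_thetaRel_of_mem_Wside {a b x y : V} (hab : G.Adj a b) (hx : x ∈ Wside G a b)
    (hy : y ∈ Wside G a b) : ¬ThetaRel G x y a b := fun hΘ => by
  have := hΘ.2.2
  have := dist_eq_add_one_of_mem_Wside hab hx
  have := dist_eq_add_one_of_mem_Wside hab hy
  omega

lemma mem_Wside_of_adj_deleteEdges_thetaClass {a b x y : V} (hab : G.Adj a b)
    (hxy : (G.deleteEdges (thetaClass G a b)).Adj x y) (hx : x ∈ Wside G a b) :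
    y ∈ Wside G a b := by
  obtain ⟨hxy, hΘ⟩ := deleteEdges_adj.mp hxy
  have hdist : G.dist x a + G.dist y b = G.dist x b + G.dist y a := by
    by_contra hne
    exact hΘ (mk_mem_thetaClass_iff.mpr ⟨hxy, hab, hne⟩)
  have := dist_eq_add_one_of_mem_Wside hab hx
  show G.dist y a < G.dist y b
  omega

lemma SimpleGraph.Reachable.mem_Wside_of_deleteEdges_thetaClass {a b u v : V} (hab : G.Adj a b)
    (huv : (G.deleteEdges (thetaClass G a b)).Reachable u v) (hu : u ∈ Wside G a b) :
    v ∈ Wside G a b := by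
  rw [reachable_iff_reflTransGen] at huv
  induction huv with
  | refl => exact hu
  | tail _ hyz ih => exact mem_Wside_of_adj_deleteEdges_thetaClass hab hyz ih

lemma reachable_deleteEdges_thetaClass_of_mem_Wside (hconn : G.Connected) {a b u : V}
    (hab : G.Adj a b) (hu : u ∈ Wside G a b) :
    (G.deleteEdges (thetaClass G a b)).Reachable u a := by
  induction hd : G.dist u a generalizing u with
  | zero => rw [hconn.dist_eq_zero_iff.mp hd]
  | succ n ih =>
    have hne : u ≠ a := by rintro rfl; simp at hd
    obtain ⟨w, huw, hw⟩ := (hconn u a).exists_adj_dist_add_one_eq hne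
    have hwW : w ∈ Wside G a b := by
      have := dist_eq_add_one_of_mem_Wside hab hu
      have : G.dist u b ≤ G.dist u w + G.dist w b := hconn.dist_triangle
      rw [dist_eq_one_iff_adj.mpr huw] at this
      show G.dist w a < G.dist w b
      omega
    have hD : (G.deleteEdges (thetaClass G a b)).Adj u w := deleteEdges_adj.mpr
      ⟨huw, fun h => not_thetaRel_of_mem_Wside hab hu hwW (mk_mem_thetaClass_iff.mp h)⟩
    exact hD.reachable.trans (ih hwW (by omega))

end

/-- If `G` is a partial cube and `F_ab` is the Θ-class of an edge `ab`, then
the spanning subgraph `G − F_ab` has exactly two connected components, with vertex sets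
`W_ab` and `W_ba`: two vertices are reachable from one another in `G − F_ab` iff they lie both
in `W_ab` or both in `W_ba`. -/
theorem partialCube_delete_theta_class_components {V : Type*} (G : SimpleGraph V)
    (hpc : IsPartialCube G) (a b : V) (hab : G.Adj a b) :
    ∀ u v : V, (G.deleteEdges (thetaClass G a b)).Reachable u v ↔
      ((u ∈ Wside G a b ∧ v ∈ Wside G a b) ∨ (u ∈ Wside G b a ∧ v ∈ Wside G b a)) := by
  have hconn : G.Connected := hpc.1
  intro u v
  constructor
  · intro huv
    rcases lt_or_gt_of_ne (hpc.isBipartite.dist_ne_of_adj hconn hab u) with hu | hu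
    · exact Or.inl ⟨hu, huv.mem_Wside_of_deleteEdges_thetaClass hab hu⟩
    · rw [thetaClass_comm] at huv
      exact Or.inr ⟨hu, huv.mem_Wside_of_deleteEdges_thetaClass hab.symm hu⟩
  · rintro (⟨hu, hv⟩ | ⟨hu, hv⟩)
    · exact (reachable_deleteEdges_thetaClass_of_mem_Wside hconn hab hu).trans
        (reachable_deleteEdges_thetaClass_of_mem_Wside hconn hab hv).symm
    · rw [thetaClass_comm]
      exact (reachable_deleteEdges_thetaClass_of_mem_Wside hconn hab.symm hu).trans
        (reachable_deleteEdges_thetaClass_of_mem_Wside hconn hab.symm hv).symm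
end

section
/- The τ-graph of a Cartesian product of partial cubes is the disjoint union of the τ-graphs of its factors: τ(G₁ □ G₂) ≅ τ(G₁) ⊔ τ(G₂). -/
open SimpleGraph Function

/-- The Θ-classes of a graph, as sets of unordered edges. -/
def IsThetaClass {V : Type*} (G : SimpleGraph V) (D : Set (Sym2 V)) : Prop :=
  ∃ a b : V, G.Adj a b ∧ D = {e | ∃ x y : V, e = s(x, y) ∧ ThetaRel G x y a b}

/-- The τ-graph of a partial cube: vertices are the Θ-classes, two classes adjacent iff there
are incident edges, one from each class, forming a convex path on three vertices. -/
def tauGraph {V : Type*} (G : SimpleGraph V) :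
    SimpleGraph {D : Set (Sym2 V) // IsThetaClass G D} where
  Adj D₁ D₂ := D₁ ≠ D₂ ∧ ∃ u v w : V, G.Adj u v ∧ G.Adj v w ∧
      s(u, v) ∈ D₁.1 ∧ s(v, w) ∈ D₂.1 ∧
      ¬ G.Adj u w ∧ ∀ x : V, G.Adj u x → G.Adj w x → x = v
  symm := ⟨by
    rintro D₁ D₂ ⟨hne, u, v, w, h1, h2, h3, h4, h5, h6⟩
    refine ⟨hne.symm, w, v, u, h2.symm, h1.symm, ?_, ?_, fun h => h5 h.symm,
      fun x hw hu => h6 x hu hw⟩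
    · rw [Sym2.eq_swap]; exact h4
    · rw [Sym2.eq_swap]; exact h3⟩
  loopless := ⟨by rintro D ⟨hne, _⟩; exact hne rfl⟩

/-!
Distances in `G □ H` add up coordinatewise, so Θ only relates edges of the same factor, and then
exactly as in that factor: the Θ-classes of the product are the copies, in every layer, of the
Θ-classes of the factors. A convex path that turns from one factor to the other spans a square,
so classes of different factors are never τ-adjacent. A convex path inside a factor lifts to any
layer as long as it does not backtrack, and it cannot: in a partial cube an edge is in relation Θ
exactly with the edges flipping the same hypercube coordinate, so Θ is transitive and distinct
Θ-classes are disjoint.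
-/

section Hamming

variable {ι : Type*} [Fintype ι] [DecidableEq ι] {β : ι → Type*} [∀ i, DecidableEq (β i)]

theorem hammingDist_eq_ite_add_sum_erase (x y : ∀ i, β i) (i : ι) :
    hammingDist x y = (if x i ≠ y i then 1 else 0) +
      ∑ k ∈ Finset.univ.erase i, if x k ≠ y k then 1 else 0 := by
  rw [hammingDist, Finset.card_filter, ← Finset.add_sum_erase _ _ (Finset.mem_univ i)]

theorem hammingDist_add_ite_eq {x y : ∀ i, β i} {i : ι} (hxy : ∀ k ≠ i, x k = y k)
    (z : ∀ i, β i) :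
    hammingDist x z + (if y i ≠ z i then 1 else 0) =
      hammingDist y z + (if x i ≠ z i then 1 else 0) := by
  rw [hammingDist_eq_ite_add_sum_erase x z i, hammingDist_eq_ite_add_sum_erase y z i,
    Finset.sum_congr rfl fun k hk => by rw [hxy k (Finset.ne_of_mem_erase hk)]]
  omega

end Hamming

section Hypercube

variable {n : ℕ}

theorem hammingDist_le_length {u v : Fin n → Bool} (p : (cubeGraph n).Walk u v) :
    hammingDist u v ≤ p.length := by
  induction p with
  | nil => simp
  | cons h p ih =>
    rw [Walk.length_cons]
    exact (hammingDist_triangle _ _ _).trans (by rw [show hammingDist _ _ = 1 from h]; omega)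

theorem exists_walk_length_eq_hammingDist (u v : Fin n → Bool) :
    ∃ p : (cubeGraph n).Walk u v, p.length = hammingDist u v := by
  induction h : hammingDist u v generalizing u with
  | zero =>
    obtain rfl := hammingDist_eq_zero.1 h
    exact ⟨.nil, rfl⟩
  | succ k ih =>
    obtain ⟨i, hi⟩ : ∃ i, u i ≠ v i := Function.ne_iff.1 (hammingDist_ne_zero.1 (by omega))
    set u' := Function.update u i (v i)
    have hagree : ∀ k ≠ i, u' k = u k := fun k hk => Function.update_of_ne hk _ _
    have hstep : (cubeGraph n).Adj u u' := by
      change hammingDist u u' = 1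
      have := hammingDist_add_ite_eq hagree u'
      simp_all [u']
    have hrest : hammingDist u' v = k := by
      have := hammingDist_add_ite_eq hagree v
      simp_all [u']
    obtain ⟨p, hp⟩ := ih u' hrest
    exact ⟨.cons hstep p, by rw [Walk.length_cons, hp]⟩

theorem cubeGraph_dist (u v : Fin n → Bool) : (cubeGraph n).dist u v = hammingDist u v := by
  obtain ⟨p, hp⟩ := exists_walk_length_eq_hammingDist u v
  obtain ⟨q, hq⟩ := Reachable.exists_walk_length_eq_dist ⟨p⟩
  exact le_antisymm (hp ▸ dist_le p) (hq ▸ hammingDist_le_length q)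

end Hypercube

section Theta

variable {V : Type*} {G : SimpleGraph V}

def thetaClassOf (G : SimpleGraph V) (a b : V) : Set (Sym2 V) :=
  {e | ∃ x y : V, e = s(x, y) ∧ ThetaRel G x y a b}

abbrev ThetaClass (G : SimpleGraph V) : Type _ := {D : Set (Sym2 V) // IsThetaClass G D}

theorem isThetaClass_iff {D : Set (Sym2 V)} :
    IsThetaClass G D ↔ ∃ a b, G.Adj a b ∧ D = thetaClassOf G a b :=
  Iff.rfl

theorem thetaRel_comm_left {x y a b : V} : ThetaRel G x y a b ↔ ThetaRel G y x a b := by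
  simp only [ThetaRel, G.adj_comm y x]
  exact and_congr_right' <| and_congr_right' ⟨fun h => by omega, fun h => by omega⟩

theorem mk_mem_thetaClassOf {x y a b : V} :
    s(x, y) ∈ thetaClassOf G a b ↔ ThetaRel G x y a b := by
  refine ⟨?_, fun h => ⟨x, y, rfl, h⟩⟩
  rintro ⟨x', y', he, h⟩
  rcases Sym2.eq_iff.1 he with ⟨rfl, rfl⟩ | ⟨rfl, rfl⟩
  · exact h
  · exact thetaRel_comm_left.2 h

theorem mk_mem_thetaClassOf_self {a b : V} (hab : G.Adj a b) : s(a, b) ∈ thetaClassOf G a b := by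
  refine mk_mem_thetaClassOf.2 ⟨hab, hab, ?_⟩
  simp [dist_comm, dist_eq_one_iff_adj.2 hab]

theorem thetaRel_iff_of_isometry {n : ℕ} {f : V → Fin n → Bool}
    (hf : ∀ u v, hammingDist (f u) (f v) = G.dist u v) {a b : V} (hab : G.Adj a b) {i : Fin n}
    (hi : f a i ≠ f b i) {x y : V} : ThetaRel G x y a b ↔ G.Adj x y ∧ f x i ≠ f y i := by
  have hagree : ∀ k ≠ i, f a k = f b k := by
    have hcard := (hf a b).trans (dist_eq_one_iff_adj.2 hab)
    intro k hk
    by_contra hne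
    exact hk (Finset.card_le_one.1 hcard.le k (by simpa using hne) i (by simpa using hi))
  have hx := hammingDist_add_ite_eq hagree (f x)
  have hy := hammingDist_add_ite_eq hagree (f y)
  rw [hf, hf] at hx hy
  -- `hx`, `hy`: `d(a, c) - d(b, c)` is `-1` or `1` according as `f c i = f a i` or not, and Θ asks
  -- whether it differs for `c = x` and `c = y`
  unfold ThetaRel
  rw [dist_comm (u := x), dist_comm (u := x), dist_comm (u := y), dist_comm (u := y)]
  simp only [hab, true_and, and_congr_right_iff]
  intro
  revert hi hx hy
  cases f a i <;> cases f b i <;> cases f x i <;> cases f y i <;> simp <;> omega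

theorem IsPartialCube.thetaClassOf_eq (hG : IsPartialCube G) {u v a b : V}
    (h : ThetaRel G u v a b) : thetaClassOf G u v = thetaClassOf G a b := by
  obtain ⟨-, n, f, -, hf⟩ := hG
  replace hf : ∀ u v, hammingDist (f u) (f v) = G.dist u v := fun u v =>
    (cubeGraph_dist _ _).symm.trans (hf u v)
  obtain ⟨i, hi⟩ : ∃ i, f a i ≠ f b i := Function.ne_iff.1 (hammingDist_ne_zero.1 (by
    rw [hf, dist_eq_one_iff_adj.2 h.2.1]; exact one_ne_zero))
  have hui := ((thetaRel_iff_of_isometry hf h.2.1 hi).1 h)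
  ext e
  induction e using Sym2.ind with
  | h x y =>
    rw [mk_mem_thetaClassOf, mk_mem_thetaClassOf, thetaRel_iff_of_isometry hf hui.1 hui.2,
      thetaRel_iff_of_isometry hf h.2.1 hi]

theorem IsPartialCube.disjoint_of_isThetaClass (hG : IsPartialCube G) {D D' : Set (Sym2 V)}
    (hD : IsThetaClass G D) (hD' : IsThetaClass G D') (hne : D ≠ D') : Disjoint D D' := by
  obtain ⟨a, b, -, rfl⟩ := isThetaClass_iff.1 hD
  obtain ⟨c, d, -, rfl⟩ := isThetaClass_iff.1 hD'
  refine Set.disjoint_left.2 fun e he he' => hne ?_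
  obtain ⟨x, y, rfl, hxy⟩ := he
  rw [← hG.thetaClassOf_eq hxy, hG.thetaClassOf_eq (mk_mem_thetaClassOf.1 he')]

end Theta

section BoxProd

variable {α β : Type*} {G : SimpleGraph α} {H : SimpleGraph β}

theorem SimpleGraph.Connected.dist_boxProd (hG : G.Connected) (hH : H.Connected) (x y : α × β) :
    (G □ H).dist x y = G.dist x.1 y.1 + H.dist x.2 y.2 := by
  rw [dist, dist, dist, edist_boxProd,
    ENat.toNat_add (edist_ne_top_iff_reachable.2 (hG.preconnected _ _))
      (edist_ne_top_iff_reachable.2 (hH.preconnected _ _))]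

theorem thetaRel_boxProd (hG : G.Connected) (hH : H.Connected) {x y u v : α × β} :
    ThetaRel (G □ H) x y u v ↔
      (x.2 = y.2 ∧ u.2 = v.2 ∧ ThetaRel G x.1 y.1 u.1 v.1) ∨
        (x.1 = y.1 ∧ u.1 = v.1 ∧ ThetaRel H x.2 y.2 u.2 v.2) := by
  obtain ⟨x₁, x₂⟩ := x
  obtain ⟨y₁, y₂⟩ := y
  obtain ⟨u₁, u₂⟩ := u
  obtain ⟨v₁, v₂⟩ := v
  simp only [ThetaRel, boxProd_adj, hG.dist_boxProd hH]
  -- both sums split into a `G`-part and an `H`-part; for edges of different factors each cancels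
  grind

variable (α β) in
/-- `S` copied into every layer `α × {z}`. -/
def liftFst (S : Set (Sym2 α)) : Set (Sym2 (α × β)) :=
  {e | (e.map Prod.snd).IsDiag ∧ e.map Prod.fst ∈ S}

variable (α β) in
def liftSnd (S : Set (Sym2 β)) : Set (Sym2 (α × β)) :=
  {e | (e.map Prod.fst).IsDiag ∧ e.map Prod.snd ∈ S}

@[simp]
theorem mk_mem_liftFst {S : Set (Sym2 α)} {x y : α × β} :
    s(x, y) ∈ liftFst α β S ↔ x.2 = y.2 ∧ s(x.1, y.1) ∈ S := by
  simp [liftFst]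

@[simp]
theorem mk_mem_liftSnd {S : Set (Sym2 β)} {x y : α × β} :
    s(x, y) ∈ liftSnd α β S ↔ x.1 = y.1 ∧ s(x.2, y.2) ∈ S := by
  simp [liftSnd]

theorem liftFst_injective [Nonempty β] : Injective (liftFst α β) := by
  obtain ⟨z⟩ := ‹Nonempty β›
  intro S T h
  ext e
  induction e using Sym2.ind with
  | h a b => simpa using Set.ext_iff.1 h s((a, z), (b, z))

theorem liftSnd_injective [Nonempty α] : Injective (liftSnd α β) := by
  obtain ⟨z⟩ := ‹Nonempty α›
  intro S T h
  ext e
  induction e using Sym2.ind with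
  | h a b => simpa using Set.ext_iff.1 h s((z, a), (z, b))

theorem thetaClassOf_boxProd_fst (hG : G.Connected) (hH : H.Connected) {a b : α}
    (hab : G.Adj a b) (z : β) :
    thetaClassOf (G □ H) (a, z) (b, z) = liftFst α β (thetaClassOf G a b) := by
  ext e
  induction e using Sym2.ind with
  | h x y => simp [mk_mem_thetaClassOf, thetaRel_boxProd hG hH, hab.ne]

theorem thetaClassOf_boxProd_snd (hG : G.Connected) (hH : H.Connected) {a b : β}
    (hab : H.Adj a b) (z : α) :
    thetaClassOf (G □ H) (z, a) (z, b) = liftSnd α β (thetaClassOf H a b) := by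
  ext e
  induction e using Sym2.ind with
  | h x y => simp [mk_mem_thetaClassOf, thetaRel_boxProd hG hH, hab.ne]

theorem isThetaClass_liftFst (hG : G.Connected) (hH : H.Connected) {D : Set (Sym2 α)}
    (hD : IsThetaClass G D) : IsThetaClass (G □ H) (liftFst α β D) := by
  obtain ⟨a, b, hab, rfl⟩ := isThetaClass_iff.1 hD
  obtain ⟨z⟩ := hH.nonempty
  exact ⟨(a, z), (b, z), boxProd_adj_left.2 hab, (thetaClassOf_boxProd_fst hG hH hab z).symm⟩

theorem isThetaClass_liftSnd (hG : G.Connected) (hH : H.Connected) {D : Set (Sym2 β)}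
    (hD : IsThetaClass H D) : IsThetaClass (G □ H) (liftSnd α β D) := by
  obtain ⟨a, b, hab, rfl⟩ := isThetaClass_iff.1 hD
  obtain ⟨z⟩ := hG.nonempty
  exact ⟨(z, a), (z, b), boxProd_adj_right.2 hab, (thetaClassOf_boxProd_snd hG hH hab z).symm⟩

theorem liftFst_ne_liftSnd_of_isThetaClass [Nonempty β] {D : Set (Sym2 α)} (hD : IsThetaClass G D)
    (D' : Set (Sym2 β)) : liftFst α β D ≠ liftSnd α β D' := by
  obtain ⟨a, b, hab, rfl⟩ := isThetaClass_iff.1 hD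
  obtain ⟨z⟩ := ‹Nonempty β›
  intro h
  have := Set.ext_iff.1 h s((a, z), (b, z))
  simp [mk_mem_thetaClassOf_self hab, hab.ne] at this

theorem exists_eq_liftFst_or_liftSnd_of_isThetaClass (hG : G.Connected) (hH : H.Connected)
    {D : Set (Sym2 (α × β))} (hD : IsThetaClass (G □ H) D) :
    (∃ D₁, IsThetaClass G D₁ ∧ D = liftFst α β D₁) ∨
      ∃ D₂, IsThetaClass H D₂ ∧ D = liftSnd α β D₂ := by
  obtain ⟨⟨a, z⟩, ⟨b, z'⟩, hab, rfl⟩ := isThetaClass_iff.1 hD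
  rcases boxProd_adj.1 hab with ⟨hab, rfl : z = z'⟩ | ⟨hzz', rfl : a = b⟩
  · exact .inl ⟨_, ⟨a, b, hab, rfl⟩, thetaClassOf_boxProd_fst hG hH hab z⟩
  · exact .inr ⟨_, ⟨z, z', hzz', rfl⟩, thetaClassOf_boxProd_snd hG hH hzz' a⟩

end BoxProd

section ConvexPath

def HasConvexP3 {V : Type*} (G : SimpleGraph V) (S T : Set (Sym2 V)) : Prop :=
  ∃ u v w : V, G.Adj u v ∧ G.Adj v w ∧ s(u, v) ∈ S ∧ s(v, w) ∈ T ∧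
    ¬ G.Adj u w ∧ ∀ x : V, G.Adj u x → G.Adj w x → x = v

theorem tauGraph_adj {V : Type*} {G : SimpleGraph V} {D D' : ThetaClass G} :
    (tauGraph G).Adj D D' ↔ D.1 ≠ D'.1 ∧ HasConvexP3 G D D' :=
  and_congr_left' Subtype.coe_injective.ne_iff.symm

theorem HasConvexP3.symm {V : Type*} {G : SimpleGraph V} {S T : Set (Sym2 V)}
    (h : HasConvexP3 G S T) : HasConvexP3 G T S := by
  obtain ⟨u, v, w, huv, hvw, hS, hT, huw, hconv⟩ := h
  exact ⟨w, v, u, hvw.symm, huv.symm, Sym2.eq_swap ▸ hT, Sym2.eq_swap ▸ hS,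
    fun h => huw h.symm, fun x hw hu => hconv x hu hw⟩

variable {α β : Type*} {G : SimpleGraph α} {H : SimpleGraph β}

/-- A path turning from a `G`-edge to an `H`-edge spans a square, whose fourth corner is a second
common neighbour of its ends. -/
theorem not_hasConvexP3_liftFst_liftSnd (S : Set (Sym2 α)) (T : Set (Sym2 β)) :
    ¬ HasConvexP3 (G □ H) (liftFst α β S) (liftSnd α β T) := by
  rintro ⟨⟨u₁, u₂⟩, ⟨v₁, v₂⟩, ⟨w₁, w₂⟩, huv, hvw, hS, hT, -, hconv⟩
  obtain ⟨rfl : u₂ = v₂, -⟩ := mk_mem_liftFst.1 hS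
  obtain ⟨rfl : v₁ = w₁, -⟩ := mk_mem_liftSnd.1 hT
  have hu := boxProd_adj_left.1 huv
  have hw := boxProd_adj_right.1 hvw
  exact hu.ne (congrArg Prod.fst
    (hconv (u₁, w₂) (boxProd_adj_right.2 hw) (boxProd_adj_left.2 hu.symm)))

theorem hasConvexP3_liftFst_iff [Nonempty β] {S T : Set (Sym2 α)} (hST : Disjoint S T) :
    HasConvexP3 (G □ H) (liftFst α β S) (liftFst α β T) ↔ HasConvexP3 G S T := by
  constructor
  · rintro ⟨⟨u₁, u₂⟩, ⟨v₁, v₂⟩, ⟨w₁, w₂⟩, huv, hvw, hS, hT, huw, hconv⟩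
    obtain ⟨rfl : u₂ = v₂, hS⟩ := mk_mem_liftFst.1 hS
    obtain ⟨rfl : u₂ = w₂, hT⟩ := mk_mem_liftFst.1 hT
    exact ⟨u₁, v₁, w₁, boxProd_adj_left.1 huv, boxProd_adj_left.1 hvw, hS, hT,
      fun h => huw (boxProd_adj_left.2 h), fun x hux hwx => congrArg Prod.fst
        (hconv (x, u₂) (boxProd_adj_left.2 hux) (boxProd_adj_left.2 hwx))⟩
  · rintro ⟨a, b, c, hab, hbc, hS, hT, hac, hconv⟩
    obtain ⟨z⟩ := ‹Nonempty β›
    -- a backtracking path `a - b - a` would not stay convex in the product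
    have hne : a ≠ c := by
      rintro rfl
      exact Set.disjoint_left.1 hST hS (Sym2.eq_swap ▸ hT)
    refine ⟨(a, z), (b, z), (c, z), boxProd_adj_left.2 hab, boxProd_adj_left.2 hbc,
      mk_mem_liftFst.2 ⟨rfl, hS⟩, mk_mem_liftFst.2 ⟨rfl, hT⟩,
      fun h => hac (boxProd_adj_left.1 h), ?_⟩
    rintro ⟨x, y⟩ hax hcx
    rcases boxProd_adj.1 hax with ⟨hax, rfl : z = y⟩ | ⟨hzy, rfl : a = x⟩
    · rw [hconv x hax (boxProd_adj_left.1 hcx)]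
    · exact (boxProd_adj.1 hcx).elim (fun h => absurd h.2 hzy.ne) (fun h => absurd h.2.symm hne)

theorem hasConvexP3_liftSnd_iff [Nonempty α] {S T : Set (Sym2 β)} (hST : Disjoint S T) :
    HasConvexP3 (G □ H) (liftSnd α β S) (liftSnd α β T) ↔ HasConvexP3 H S T := by
  constructor
  · rintro ⟨⟨u₁, u₂⟩, ⟨v₁, v₂⟩, ⟨w₁, w₂⟩, huv, hvw, hS, hT, huw, hconv⟩
    obtain ⟨rfl : u₁ = v₁, hS⟩ := mk_mem_liftSnd.1 hS
    obtain ⟨rfl : u₁ = w₁, hT⟩ := mk_mem_liftSnd.1 hT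
    exact ⟨u₂, v₂, w₂, boxProd_adj_right.1 huv, boxProd_adj_right.1 hvw, hS, hT,
      fun h => huw (boxProd_adj_right.2 h), fun x hux hwx => congrArg Prod.snd
        (hconv (u₁, x) (boxProd_adj_right.2 hux) (boxProd_adj_right.2 hwx))⟩
  · rintro ⟨a, b, c, hab, hbc, hS, hT, hac, hconv⟩
    obtain ⟨z⟩ := ‹Nonempty α›
    have hne : a ≠ c := by
      rintro rfl
      exact Set.disjoint_left.1 hST hS (Sym2.eq_swap ▸ hT)
    refine ⟨(z, a), (z, b), (z, c), boxProd_adj_right.2 hab, boxProd_adj_right.2 hbc,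
      mk_mem_liftSnd.2 ⟨rfl, hS⟩, mk_mem_liftSnd.2 ⟨rfl, hT⟩,
      fun h => hac (boxProd_adj_right.1 h), ?_⟩
    rintro ⟨x, y⟩ hax hcx
    rcases boxProd_adj.1 hax with ⟨hzx, rfl : a = y⟩ | ⟨hay, rfl : z = x⟩
    · exact (boxProd_adj.1 hcx).elim (fun h => absurd h.2.symm hne) (fun h => absurd h.2 hzx.ne)
    · rw [hconv y hay (boxProd_adj_right.1 hcx)]

end ConvexPath

section TauGraph

variable {α β : Type*} {G : SimpleGraph α} {H : SimpleGraph β}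

def thetaClassSum (hG : G.Connected) (hH : H.Connected) :
    ThetaClass G ⊕ ThetaClass H → ThetaClass (G □ H) :=
  Sum.elim (fun D => ⟨liftFst α β D, isThetaClass_liftFst hG hH D.2⟩)
    (fun D => ⟨liftSnd α β D, isThetaClass_liftSnd hG hH D.2⟩)

theorem thetaClassSum_bijective (hG : G.Connected) (hH : H.Connected) :
    Bijective (thetaClassSum hG hH) := by
  have := hG.nonempty
  have := hH.nonempty
  constructor
  · rintro (D | D) (D' | D') h <;> replace h := congrArg Subtype.val h
    · exact congrArg Sum.inl (Subtype.ext (liftFst_injective h))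
    · exact absurd h (liftFst_ne_liftSnd_of_isThetaClass D.2 _)
    · exact absurd h.symm (liftFst_ne_liftSnd_of_isThetaClass D'.2 _)
    · exact congrArg Sum.inr (Subtype.ext (liftSnd_injective h))
  · rintro ⟨D, hD⟩
    rcases exists_eq_liftFst_or_liftSnd_of_isThetaClass hG hH hD with
      ⟨D₁, hD₁, rfl⟩ | ⟨D₂, hD₂, rfl⟩
    · exact ⟨.inl ⟨D₁, hD₁⟩, rfl⟩
    · exact ⟨.inr ⟨D₂, hD₂⟩, rfl⟩

theorem tauGraph_adj_thetaClassSum (hG : IsPartialCube G) (hH : IsPartialCube H)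
    (s t : ThetaClass G ⊕ ThetaClass H) :
    (tauGraph (G □ H)).Adj (thetaClassSum hG.1 hH.1 s) (thetaClassSum hG.1 hH.1 t) ↔
      (tauGraph G ⊕g tauGraph H).Adj s t := by
  have := hG.1.nonempty
  have := hH.1.nonempty
  rcases s with D | D <;> rcases t with D' | D' <;>
    simp only [thetaClassSum, Sum.elim_inl, Sum.elim_inr, sum_adj_inl, sum_adj_inr, tauGraph_adj]
  · rw [liftFst_injective.ne_iff]
    exact and_congr_right fun hne =>
      hasConvexP3_liftFst_iff (hG.disjoint_of_isThetaClass D.2 D'.2 hne)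
  · exact iff_of_false (fun h => not_hasConvexP3_liftFst_liftSnd _ _ h.2) (by simp)
  · exact iff_of_false (fun h => not_hasConvexP3_liftFst_liftSnd _ _ h.2.symm) (by simp)
  · rw [liftSnd_injective.ne_iff]
    exact and_congr_right fun hne =>
      hasConvexP3_liftSnd_iff (hH.disjoint_of_isThetaClass D.2 D'.2 hne)

end TauGraph

/-- The τ-graph of a Cartesian product of partial cubes is the disjoint
union of the τ-graphs of its factors: `τ(G₁ □ G₂) ≅ τ(G₁) ⊔ τ(G₂)`. -/
theorem tauGraph_boxProd {α β : Type*} (G₁ : SimpleGraph α) (G₂ : SimpleGraph β)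
    (h₁ : IsPartialCube G₁) (h₂ : IsPartialCube G₂) :
    Nonempty (tauGraph (G₁ □ G₂) ≃g (tauGraph G₁).sum (tauGraph G₂)) :=
  ⟨Iso.symm ⟨Equiv.ofBijective _ (thetaClassSum_bijective h₁.1 h₂.1),
    tauGraph_adj_thetaClassSum h₁ h₂ _ _⟩⟩
end
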